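/- Let X be a real Gaussian random variable with mean μ and variance σ² (σ > 0) conditioned to lie in the interval [a, b] with a < b (a truncated Gaussian). With α = (a−μ)/σ, β = (b−μ)/σ, φ the standard normal density, Φ the standard normal CDF, and Z = Φ(β) − Φ(α), the fourth non-central moment of X equals E[X⁴] = μ⁴ + 4σμ³(φ(α) − φ(β))/Z + 6σ²μ²(1 + (αφ(α) − βφ(β))/Z) + 4σ³μ((α²+2)φ(α) − (β²+2)φ(β))/Z + σ⁴(3 + ((α³+3α)φ(α) − (β³+3β)φ(β))/Z). -/

import Mathlib

open MeasureTheory ProbabilityTheory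
open scoped NNReal

noncomputable section

/-- The truncated Gaussian distribution `N_T(m, σ²)` on `[a, b]`: a real Gaussian with mean `m`
and variance `σ²` conditioned on the event of lying in the interval `[a, b]`. -/
def truncGauss (m σ a b : ℝ) : Measure ℝ :=
  ProbabilityTheory.cond (gaussianReal m ⟨σ ^ 2, sq_nonneg σ⟩) (Set.Icc a b)

/-!
Substituting `x = σ t + m`, the truncated Gaussian has density `φ / Z` on `[α, β]`, so
`E[X⁴] = (∫_α^β (σ t + m)⁴ φ(t) dt) / Z`. Since `φ' = -t φ`, Stein's identity
`(G' - t G) φ = (G φ)'` holds for every differentiable `G`, and for the cubic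
`G = -(4σm³ + 6σ²m² t + 4σ³m (t² + 2) + σ⁴ (t³ + 3t))` one has
`(σ t + m)⁴ = m⁴ + 6σ²m² + 3σ⁴ + G' - t G`. Hence the integral is
`(m⁴ + 6σ²m² + 3σ⁴) Z + G(β) φ(β) - G(α) φ(α)`.
-/

open Real Set

namespace ProbabilityTheory

lemma gaussianPDFReal_zero_one (x : ℝ) :
    gaussianPDFReal 0 1 x = exp (-x ^ 2 / 2) / √(2 * π) := by
  simp [gaussianPDFReal_def, div_eq_inv_mul]

@[fun_prop]
lemma continuous_gaussianPDFReal (μ : ℝ) (v : ℝ≥0) : Continuous (gaussianPDFReal μ v) := by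
  rw [gaussianPDFReal_def]; fun_prop

lemma hasDerivAt_gaussianPDFReal_zero_one (x : ℝ) :
    HasDerivAt (gaussianPDFReal 0 1) (-x * gaussianPDFReal 0 1 x) x := by
  have hquad : HasDerivAt (fun t : ℝ => -t ^ 2 / 2) (-x) x :=
    ((hasDerivAt_pow 2 x).neg.div_const 2).congr_deriv (by push_cast; ring)
  have h := hquad.exp.div_const √(2 * π)
  rw [← funext gaussianPDFReal_zero_one] at h
  exact h.congr_deriv (by rw [gaussianPDFReal_zero_one]; ring)

lemma gaussianPDFReal_affine (m : ℝ) {σ : ℝ} {v : ℝ≥0} (hσ : 0 < σ) (hv : (v : ℝ) = σ ^ 2)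
    (t : ℝ) : gaussianPDFReal m v (σ * t + m) = σ⁻¹ * gaussianPDFReal 0 1 t := by
  rw [gaussianPDFReal_add, sub_self, gaussianPDFReal_mul hσ.ne', abs_of_pos (inv_pos.2 hσ),
    mul_zero]
  congr 2
  ext
  simp [hv, hσ.ne']

lemma setIntegral_gaussianReal {μ : ℝ} {v : ℝ≥0} (hv : v ≠ 0) {s : Set ℝ} (hs : MeasurableSet s)
    (f : ℝ → ℝ) :
    ∫ x in s, f x ∂gaussianReal μ v = ∫ x in s, gaussianPDFReal μ v x * f x := by
  rw [gaussianReal_of_var_ne_zero _ hv, gaussianPDF_def,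
    setIntegral_withDensity_eq_setIntegral_toReal_smul (μ := volume)
      (f := fun x => ENNReal.ofReal (gaussianPDFReal μ v x)) (g := f)
      (measurable_gaussianPDFReal μ v).ennreal_ofReal
      (ae_of_all _ fun _ => ENNReal.ofReal_lt_top) hs]
  simp [ENNReal.toReal_ofReal (gaussianPDFReal_nonneg _ _ _)]

lemma setIntegral_Icc_gaussianReal (m : ℝ) {σ a b : ℝ} {v : ℝ≥0} (hσ : 0 < σ)
    (hv : (v : ℝ) = σ ^ 2) (hab : a ≤ b) (f : ℝ → ℝ) :
    ∫ x in Icc a b, f x ∂gaussianReal m v =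
      ∫ t in (a - m) / σ..(b - m) / σ, f (σ * t + m) * gaussianPDFReal 0 1 t := by
  have hv0 : v ≠ 0 := by
    rw [← NNReal.coe_ne_zero, hv]; positivity
  rw [setIntegral_gaussianReal hv0 measurableSet_Icc, integral_Icc_eq_integral_Ioc,
    ← intervalIntegral.integral_of_le hab]
  have hsub := intervalIntegral.smul_integral_comp_mul_add
    (fun x => gaussianPDFReal m v x * f x) σ m (a := (a - m) / σ) (b := (b - m) / σ)
  rw [mul_div_cancel₀ _ hσ.ne', mul_div_cancel₀ _ hσ.ne', sub_add_cancel, sub_add_cancel] at hsub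
  rw [← hsub, smul_eq_mul, ← intervalIntegral.integral_const_mul]
  refine intervalIntegral.integral_congr fun t _ => ?_
  simp only [gaussianPDFReal_affine m hσ hv]
  field_simp

lemma integral_stein_gaussianPDFReal {G G' : ℝ → ℝ} (hG : ∀ x, HasDerivAt G (G' x) x)
    (hG' : Continuous G') (α β : ℝ) :
    ∫ t in α..β, (G' t - t * G t) * gaussianPDFReal 0 1 t =
      G β * gaussianPDFReal 0 1 β - G α * gaussianPDFReal 0 1 α := by
  have hGc : Continuous G := Differentiable.continuous fun x => (hG x).differentiableAt
  refine intervalIntegral.integral_eq_sub_of_hasDerivAt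
    (f := fun t => G t * gaussianPDFReal 0 1 t) (fun x _ => ?_)
    (Continuous.intervalIntegrable (by fun_prop) α β)
  exact ((hG x).mul (hasDerivAt_gaussianPDFReal_zero_one x)).congr_deriv (by ring)

lemma integral_affine_pow_four_mul_gaussianPDFReal (m σ α β : ℝ) :
    ∫ t in α..β, (σ * t + m) ^ 4 * gaussianPDFReal 0 1 t =
      let φ := gaussianPDFReal 0 1
      let Z := ∫ t in α..β, φ t
      m ^ 4 * Z + 4 * σ * m ^ 3 * (φ α - φ β)
        + 6 * σ ^ 2 * m ^ 2 * (Z + (α * φ α - β * φ β))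
        + 4 * σ ^ 3 * m * ((α ^ 2 + 2) * φ α - (β ^ 2 + 2) * φ β)
        + σ ^ 4 * (3 * Z + ((α ^ 3 + 3 * α) * φ α - (β ^ 3 + 3 * β) * φ β)) := by
  set G : ℝ → ℝ := fun t => -(4 * σ * m ^ 3 + 6 * σ ^ 2 * m ^ 2 * t
    + 4 * σ ^ 3 * m * (t ^ 2 + 2) + σ ^ 4 * (t ^ 3 + 3 * t))
  set G' : ℝ → ℝ := fun t => -(6 * σ ^ 2 * m ^ 2 + 8 * σ ^ 3 * m * t + 3 * σ ^ 4 * (t ^ 2 + 1))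
  have hG : ∀ x, HasDerivAt G (G' x) x := fun x =>
    (((((hasDerivAt_id x).const_mul (6 * σ ^ 2 * m ^ 2)).const_add (4 * σ * m ^ 3)).add
      (((hasDerivAt_pow 2 x).add_const 2).const_mul (4 * σ ^ 3 * m))).add
      (((hasDerivAt_pow 3 x).add ((hasDerivAt_id x).const_mul 3)).const_mul (σ ^ 4))).neg
      |>.congr_deriv (by simp only [G']; push_cast; ring)
  have hstein := integral_stein_gaussianPDFReal hG (by fun_prop) α β
  have hsplit : ∀ t, (σ * t + m) ^ 4 * gaussianPDFReal 0 1 t =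
      (m ^ 4 + 6 * σ ^ 2 * m ^ 2 + 3 * σ ^ 4) * gaussianPDFReal 0 1 t
        + (G' t - t * G t) * gaussianPDFReal 0 1 t := fun t => by simp only [G, G']; ring
  have hφ := (continuous_gaussianPDFReal 0 1).intervalIntegrable (μ := volume) α β
  simp_rw [hsplit]
  rw [intervalIntegral.integral_add (hφ.const_mul _)
    (Continuous.intervalIntegrable (by fun_prop) _ _), intervalIntegral.integral_const_mul, hstein]
  simp only [G]; ring

lemma isProbabilityMeasure_cond_gaussianReal_Icc (μ : ℝ) {v : ℝ≥0} (hv : v ≠ 0) {a b : ℝ}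
    (hab : a < b) : IsProbabilityMeasure (cond (gaussianReal μ v) (Icc a b)) := by
  refine cond_isProbabilityMeasure fun h => ?_
  exact hab.not_ge (by simpa [Real.volume_Icc] using gaussianReal_absolutelyContinuous' μ hv h)

lemma integral_cond_gaussianReal_Icc (m : ℝ) {σ a b : ℝ} {v : ℝ≥0} (hσ : 0 < σ)
    (hv : (v : ℝ) = σ ^ 2) (hab : a ≤ b) (f : ℝ → ℝ) :
    ∫ x, f x ∂cond (gaussianReal m v) (Icc a b) =
      (∫ t in (a - m) / σ..(b - m) / σ, f (σ * t + m) * gaussianPDFReal 0 1 t) /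
        ∫ t in (a - m) / σ..(b - m) / σ, gaussianPDFReal 0 1 t := by
  have hmass := setIntegral_Icc_gaussianReal m hσ hv hab (fun _ => 1)
  simp only [setIntegral_const, smul_eq_mul, mul_one, one_mul] at hmass
  rw [cond, integral_smul_measure, ENNReal.toReal_inv, ← measureReal_def, hmass,
    setIntegral_Icc_gaussianReal m hσ hv hab f]
  simp [div_eq_inv_mul]

end ProbabilityTheory

theorem truncated_gaussian_fourth_moment_general
    {Ω : Type*} [MeasurableSpace Ω] (P : Measure Ω)
    (X : Ω → ℝ) (m σ a b : ℝ) (hσ : 0 < σ) (hab : a < b)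
    (hX : Measure.map X P = truncGauss m σ a b)
    (φ : ℝ → ℝ) (hφ : φ = fun x => Real.exp (-x ^ 2 / 2) / Real.sqrt (2 * Real.pi))
    (Φ : ℝ → ℝ) (hΦ : ∀ x, Φ x = ∫ t in Set.Iic x, φ t)
    (α β Z : ℝ) (hα : α = (a - m) / σ) (hβ : β = (b - m) / σ) (hZ : Z = Φ β - Φ α) :
    ∫ ω, X ω ^ 4 ∂P =
      m ^ 4 + 4 * σ * m ^ 3 * ((φ α - φ β) / Z)
        + 6 * σ ^ 2 * m ^ 2 * (1 + (α * φ α - β * φ β) / Z)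
        + 4 * σ ^ 3 * m * (((α ^ 2 + 2) * φ α - (β ^ 2 + 2) * φ β) / Z)
        + σ ^ 4 * (3 + ((α ^ 3 + 3 * α) * φ α - (β ^ 3 + 3 * β) * φ β) / Z) := by
  obtain rfl : φ = gaussianPDFReal 0 1 := hφ.trans (funext gaussianPDFReal_zero_one).symm
  have hZ_eq : Z = ∫ t in α..β, gaussianPDFReal 0 1 t := by
    rw [hZ, hΦ, hΦ, intervalIntegral.integral_Iic_sub_Iic
      (integrable_gaussianPDFReal 0 1).integrableOn (integrable_gaussianPDFReal 0 1).integrableOn]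
  have hZ_pos : 0 < Z := hZ_eq ▸ intervalIntegral.intervalIntegral_pos_of_pos
    ((continuous_gaussianPDFReal 0 1).intervalIntegrable α β)
    (fun x => gaussianPDFReal_pos 0 1 x one_ne_zero)
    (by rw [hα, hβ]; exact div_lt_div_of_pos_right (by linarith) hσ)
  have : IsProbabilityMeasure (truncGauss m σ a b) :=
    isProbabilityMeasure_cond_gaussianReal_Icc m
      (ne_of_gt (show (0 : ℝ) < σ ^ 2 by positivity)) hab
  have hXm : AEMeasurable X P := .of_map_ne_zero (hX ▸ IsProbabilityMeasure.ne_zero _)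
  calc ∫ ω, X ω ^ 4 ∂P = ∫ x, x ^ 4 ∂truncGauss m σ a b := by
        rw [← hX, integral_map hXm (by fun_prop)]
    _ = (∫ t in α..β, (σ * t + m) ^ 4 * gaussianPDFReal 0 1 t) / Z := by
        rw [hZ_eq, hα, hβ]
        exact integral_cond_gaussianReal_Icc m hσ rfl hab.le (fun x => x ^ 4)
    _ = _ := by
        rw [integral_affine_pow_four_mul_gaussianPDFReal]
        dsimp only
        rw [← hZ_eq]
        field_simp

/-- The fourth non-central moment of a truncated Gaussian random variable. -/
theorem truncated_gaussian_fourth_moment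
    {Ω : Type*} [MeasurableSpace Ω] (P : Measure Ω) [IsProbabilityMeasure P]
    (X : Ω → ℝ) (m σ a b : ℝ) (hσ : 0 < σ) (hab : a < b)
    (hX : Measure.map X P = truncGauss m σ a b)
    (φ : ℝ → ℝ) (hφ : φ = fun x => Real.exp (-x ^ 2 / 2) / Real.sqrt (2 * Real.pi))
    (Φ : ℝ → ℝ) (hΦ : ∀ x, Φ x = ∫ t in Set.Iic x, φ t)
    (α β Z : ℝ) (hα : α = (a - m) / σ) (hβ : β = (b - m) / σ) (hZ : Z = Φ β - Φ α) :
    ∫ ω, X ω ^ 4 ∂P =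
      m ^ 4 + 4 * σ * m ^ 3 * ((φ α - φ β) / Z)
        + 6 * σ ^ 2 * m ^ 2 * (1 + (α * φ α - β * φ β) / Z)
        + 4 * σ ^ 3 * m * (((α ^ 2 + 2) * φ α - (β ^ 2 + 2) * φ β) / Z)
        + σ ^ 4 * (3 + ((α ^ 3 + 3 * α) * φ α - (β ^ 3 + 3 * β) * φ β) / Z) :=
  truncated_gaussian_fourth_moment_general P X m σ a b hσ hab hX φ hφ Φ hΦ α β Z hα hβ hZ
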